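/- Let X = X₀⟨0| + X₁⟨1| be an operator from H_in ⊗ ℂ² to H_out, where X₀, X₁ : H_in → H_out. Suppose ρ is a full-rank density matrix on H_in such that ‖ρ^{1/2}(Xᵢ†Xⱼ - δᵢⱼ𝟙)ρ^{1/2}‖₁ ≤ ε for all i,j ∈ {0,1}. Then for every unit vector |μ⟩ ∈ ℂ², ‖(ρ ⊗ |μ⟩⟨μ|)^{1/2}(X†X - 𝟙)(ρ ⊗ |μ⟩⟨μ|)^{1/2}‖₁ ≤ 4ε. -/

import Mathlib

open scoped ComplexOrder Matrix Kronecker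

open Classical in
/-- Square root of a positive semidefinite matrix (junk value `0` otherwise). -/
noncomputable def msqrt {n : Type*} [Fintype n] [DecidableEq n] (A : Matrix n n ℂ) :
    Matrix n n ℂ :=
  if h : A.PosSemidef then
    (h.1.eigenvectorUnitary : Matrix n n ℂ) *
      Matrix.diagonal ((↑) ∘ (√·) ∘ h.1.eigenvalues) *
      (star h.1.eigenvectorUnitary : Matrix n n ℂ)
  else 0

/-- Trace norm `‖A‖₁ = Tr √(Aᴴ A)`. -/
noncomputable def traceNorm {n : Type*} [Fintype n] [DecidableEq n] (A : Matrix n n ℂ) : ℝ :=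
  (msqrt (Aᴴ * A)).trace.re

namespace ProofAux
open Matrix

variable {n : Type*} [Fintype n] [DecidableEq n]

noncomputable def _root_.Matrix.PosSemidef.sqrt {A : Matrix n n ℂ} (h : A.PosSemidef) :
    Matrix n n ℂ :=
  (h.1.eigenvectorUnitary : Matrix n n ℂ) *
    Matrix.diagonal ((↑) ∘ (√·) ∘ h.1.eigenvalues) *
    (star h.1.eigenvectorUnitary : Matrix n n ℂ)

open scoped MatrixOrder in
lemma _root_.Matrix.PosSemidef.sqrt_eq_cfc' {A : Matrix n n ℂ} (h : A.PosSemidef) :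
    h.sqrt = CFC.sqrt A := by
  rw [CFC.sqrt_eq_real_sqrt A h.nonneg, cfcₙ_eq_cfc, h.1.cfc_eq]
  simp [Matrix.IsHermitian.cfc, Matrix.PosSemidef.sqrt]

open scoped MatrixOrder in
lemma _root_.Matrix.PosSemidef.posSemidef_sqrt {A : Matrix n n ℂ} (h : A.PosSemidef) :
    h.sqrt.PosSemidef := by
  rw [h.sqrt_eq_cfc']; exact Matrix.nonneg_iff_posSemidef.mp (CFC.sqrt_nonneg A)

open scoped MatrixOrder in
lemma _root_.Matrix.PosSemidef.sqrt_mul_self {A : Matrix n n ℂ} (h : A.PosSemidef) :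
    h.sqrt * h.sqrt = A := by
  rw [h.sqrt_eq_cfc']; exact CFC.sqrt_mul_sqrt_self A h.nonneg

open scoped MatrixOrder in
lemma _root_.Matrix.PosSemidef.eq_sqrt_of_sq_eq {A B : Matrix n n ℂ} (hB : B.PosSemidef)
    (hA : A.PosSemidef) (hBB : B ^ 2 = A) : B = hA.sqrt := by
  rw [hA.sqrt_eq_cfc']; exact (CFC.sqrt_unique (by rw [← sq]; exact hBB) hB.nonneg).symm

lemma msqrt_of_psd {A : Matrix n n ℂ} (hA : A.PosSemidef) : msqrt A = hA.sqrt := dif_pos hA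

lemma msqrt_psd {A : Matrix n n ℂ} (hA : A.PosSemidef) : (msqrt A).PosSemidef := by
  rw [msqrt_of_psd hA]; exact hA.posSemidef_sqrt

lemma msqrt_mul_self {A : Matrix n n ℂ} (hA : A.PosSemidef) : msqrt A * msqrt A = A := by
  rw [msqrt_of_psd hA]; exact hA.sqrt_mul_self

lemma msqrt_eq {A B : Matrix n n ℂ} (hB : B.PosSemidef) (hBB : B * B = A) : msqrt A = B := by
  have hA : A.PosSemidef := by
    have h1 : Bᴴ * B = A := by rw [hB.1.eq]; exact hBB
    exact h1 ▸ posSemidef_conjTranspose_mul_self B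
  rw [msqrt_of_psd hA]
  exact (hB.eq_sqrt_of_sq_eq hA (by rw [sq]; exact hBB)).symm

lemma psd_diag_re_nonneg {A : Matrix n n ℂ} (hA : A.PosSemidef) (i : n) : 0 ≤ (A i i).re := by
  have h := hA.dotProduct_mulVec_nonneg (Pi.single i 1)
  have : dotProduct (star (Pi.single i 1)) (A *ᵥ Pi.single i 1) = A i i := by
    simp [dotProduct, mulVec, Pi.single_apply, Finset.sum_ite_eq, apply_ite star]
  rw [this] at h
  exact (Complex.le_def.mp h).1

lemma trace_re_nonneg {A : Matrix n n ℂ} (hA : A.PosSemidef) : 0 ≤ A.trace.re := by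
  rw [Matrix.trace, Complex.re_sum]
  exact Finset.sum_nonneg fun i _ => psd_diag_re_nonneg hA i

lemma traceNorm_nonneg (A : Matrix n n ℂ) : 0 ≤ traceNorm A :=
  trace_re_nonneg (msqrt_psd (posSemidef_conjTranspose_mul_self A))

lemma traceNorm_psd_eq {A : Matrix n n ℂ} (hA : A.PosSemidef) : traceNorm A = A.trace.re := by
  unfold traceNorm
  rw [hA.1.eq, msqrt_eq hA rfl]

end ProofAux

set_option linter.unusedSectionVars false
set_option maxHeartbeats 1000000
open Matrix
namespace ProofAux2

variable {n : Type*} [Fintype n] [DecidableEq n]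

def toE (x : n → ℂ) : EuclideanSpace ℂ n := WithLp.toLp 2 x

lemma inner_eq_dot (x y : n → ℂ) :
    (inner ℂ (toE x) (toE y) : ℂ) = dotProduct (star x) y := by
  simp [PiLp.inner_apply, RCLike.inner_apply, dotProduct, toE]
  exact Finset.sum_congr rfl fun _ _ => mul_comm _ _

lemma dot_conjTranspose_mul (M : Matrix n n ℂ) (x y : n → ℂ) :
    dotProduct (star x) ((Mᴴ * M) *ᵥ y) = dotProduct (star (M *ᵥ x)) (M *ᵥ y) := by
  rw [← Matrix.mulVec_mulVec, Matrix.dotProduct_mulVec (star x) Mᴴ (M *ᵥ y), star_mulVec]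

lemma norm_mulVec_unitary {W : Matrix n n ℂ} (hW : Wᴴ * W = 1) (x : n → ℂ) :
    ‖toE (W *ᵥ x)‖ = ‖toE x‖ := by
  have h1 : (inner ℂ (toE (W *ᵥ x)) (toE (W *ᵥ x)) : ℂ) = inner ℂ (toE x) (toE x) := by
    rw [inner_eq_dot, inner_eq_dot, ← dot_conjTranspose_mul, hW, Matrix.one_mulVec]
  have h2 := congrArg (fun z : ℂ => RCLike.re (K := ℂ) z) h1
  rw [inner_self_eq_norm_sq (𝕜 := ℂ), inner_self_eq_norm_sq (𝕜 := ℂ)] at h2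
  have h3 := norm_nonneg (toE (W *ᵥ x))
  nlinarith [norm_nonneg (toE x)]

lemma diag_CMC {C : Matrix n n ℂ} (hCh : Cᴴ = C) (W : Matrix n n ℂ) (i : n) :
    (C * W * C) i i = dotProduct (star (fun k => C k i)) (W *ᵥ (fun k => C k i)) := by
  simp only [Matrix.mul_apply, dotProduct, mulVec, Pi.star_apply, Finset.sum_mul, Finset.mul_sum]
  rw [Finset.sum_comm]
  refine Finset.sum_congr rfl fun k _ => Finset.sum_congr rfl fun j _ => ?_
  have hC : C i k = star (C k i) := by rw [← conjTranspose_apply, hCh]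
  rw [hC]; ring


open ProofAux

variable {n : Type*} [Fintype n] [DecidableEq n]

/-- If `W` is unitary and `B` is PSD then `Re tr (W B) ≤ tr B`. -/
lemma re_trace_unitary_mul_le {W B : Matrix n n ℂ} (hB : B.PosSemidef) (hW : Wᴴ * W = 1) :
    (W * B).trace.re ≤ B.trace.re := by
  set C : Matrix n n ℂ := msqrt B with hCdef
  have hCpsd : C.PosSemidef := msqrt_psd hB
  have hCC : C * C = B := msqrt_mul_self hB
  have hCh : Cᴴ = C := hCpsd.1.eq
  have key : ∀ V : Matrix n n ℂ, (V * B).trace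
      = ∑ i, dotProduct (star (fun k => C k i)) (V *ᵥ (fun k => C k i)) := by
    intro V
    rw [← hCC, ← Matrix.mul_assoc, Matrix.trace_mul_cycle, Matrix.trace]
    exact Finset.sum_congr rfl fun i _ => diag_CMC hCh V i
  have key1 : B.trace = ∑ i, dotProduct (star (fun k => C k i)) ((fun k => C k i) : n → ℂ) := by
    have := key 1
    rw [Matrix.one_mul] at this
    rw [this]
    exact Finset.sum_congr rfl fun i _ => by rw [Matrix.one_mulVec]
  rw [key W, key1, Complex.re_sum, Complex.re_sum]
  refine Finset.sum_le_sum fun i _ => ?_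
  set x : n → ℂ := fun k => C k i with hx
  have e1 : dotProduct (star x) (W *ᵥ x) = (inner ℂ (toE x) (toE (W *ᵥ x)) : ℂ) :=
    (inner_eq_dot x (W *ᵥ x)).symm
  have e2 : dotProduct (star x) x = (inner ℂ (toE x) (toE x) : ℂ) := (inner_eq_dot x x).symm
  rw [e1, e2]
  have h1 : Complex.re (inner ℂ (toE x) (toE (W *ᵥ x)) : ℂ)
      ≤ ‖(inner ℂ (toE x) (toE (W *ᵥ x)) : ℂ)‖ := Complex.re_le_norm _
  refine h1.trans ?_
  have h2 := norm_inner_le_norm (𝕜 := ℂ) (toE x) (toE (W *ᵥ x))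
  rw [norm_mulVec_unitary hW] at h2
  have h3 : Complex.re (inner ℂ (toE x) (toE x) : ℂ) = ‖toE x‖ ^ 2 := by
    have := inner_self_eq_norm_sq (𝕜 := ℂ) (toE x)
    simpa using this
  rw [h3]
  nlinarith [norm_nonneg (toE x)]

lemma columns_orthonormal_unitary {f : n → EuclideanSpace ℂ n} (hf : Orthonormal ℂ f) :
    (of fun i j => f j i)ᴴ * (of fun i j => f j i) = 1 := by
  ext j k
  have h := orthonormal_iff_ite.mp hf j k
  rw [show (inner ℂ (f j) (f k) : ℂ) = dotProduct (star (f j : n → ℂ)) (f k : n → ℂ) from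
    inner_eq_dot _ _] at h
  simp only [mul_apply, conjTranspose_apply, of_apply, one_apply]
  rw [← h]
  simp [dotProduct]

lemma exists_polar (A : Matrix n n ℂ) :
    ∃ U : Matrix n n ℂ, Uᴴ * U = 1 ∧ A = U * (posSemidef_conjTranspose_mul_self A).sqrt := by
  classical
  have hAA : (Aᴴ * A).PosSemidef := posSemidef_conjTranspose_mul_self A
  have hH : (Aᴴ * A).IsHermitian := hAA.1
  set d : n → ℝ := hH.eigenvalues with hd
  have hdnn : ∀ i, 0 ≤ d i := hAA.eigenvalues_nonneg
  set v : n → (n → ℂ) := fun j => hH.eigenvectorBasis j with hv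
  have hortho : Orthonormal ℂ (fun j => toE (v j)) := hH.eigenvectorBasis.orthonormal
  have hinner : ∀ i j, (inner ℂ (toE (v i)) (toE (v j)) : ℂ) = if i = j then 1 else 0 :=
    orthonormal_iff_ite.mp hortho
  have hmv : ∀ j, (Aᴴ * A) *ᵥ v j = d j • v j := fun j => hH.mulVec_eigenvectorBasis j
  have key : ∀ i j, dotProduct (star (A *ᵥ v i)) (A *ᵥ v j)
      = (d j : ℂ) * (if i = j then 1 else 0) := by
    intro i j
    rw [← dot_conjTranspose_mul, hmv j, dotProduct_smul, ← hinner i j, inner_eq_dot]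
    simp [Complex.real_smul]
  set s : Set n := {j | d j ≠ 0} with hs
  set u : n → EuclideanSpace ℂ n :=
    fun j => ((Real.sqrt (d j) : ℂ))⁻¹ • toE (A *ᵥ v j) with hu
  have horthu : Orthonormal ℂ (s.restrict u) := by
    rw [orthonormal_iff_ite]
    rintro ⟨i, hi⟩ ⟨j, hj⟩
    simp only [Set.restrict, Set.domRestrict_apply, hu]
    rw [inner_smul_left, inner_smul_right, inner_eq_dot, key i j]
    by_cases hij : i = j
    · subst hij
      have hdi : 0 < d i := lt_of_le_of_ne (hdnn i) (Ne.symm hi)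
      have hne : (Real.sqrt (d i) : ℂ) ≠ 0 := Complex.ofReal_ne_zero.mpr (by positivity)
      have hsq : ((d i : ℝ) : ℂ) = (Real.sqrt (d i) : ℂ) * (Real.sqrt (d i) : ℂ) := by
        rw [← Complex.ofReal_mul, Real.mul_self_sqrt hdi.le]
      simp only [if_pos rfl, Subtype.mk.injEq, eq_self_iff_true, if_true, mul_one]
      rw [map_inv₀, Complex.conj_ofReal, hsq]
      field_simp
    · have hne' : (⟨i, hi⟩ : s) ≠ ⟨j, hj⟩ := by simpa using hij
      rw [if_neg hij, if_neg hne']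
      ring
  obtain ⟨b, hb⟩ := horthu.exists_orthonormalBasis_extension_of_card_eq
    (finrank_euclideanSpace (𝕜 := ℂ) (ι := n))
  set Q : Matrix n n ℂ := of fun i j => v j i with hQdef
  set B : Matrix n n ℂ := of fun i j => b j i with hBdef
  have hQ : Qᴴ * Q = 1 := columns_orthonormal_unitary hortho
  have hQ2 : Q * Qᴴ = 1 := mul_eq_one_comm.mp hQ
  have hB : Bᴴ * B = 1 := columns_orthonormal_unitary b.orthonormal
  set c : n → ℂ := fun j => (Real.sqrt (d j) : ℂ) with hc
  have hQe : (hH.eigenvectorUnitary : Matrix n n ℂ) = Q := by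
    ext i j
    rfl
  have hsqrt : hAA.sqrt = Q * diagonal c * Qᴴ := by
    rw [show hAA.sqrt = (hAA.1.eigenvectorUnitary : Matrix n n ℂ)
        * diagonal ((↑) ∘ Real.sqrt ∘ hAA.1.eigenvalues)
        * (star hAA.1.eigenvectorUnitary : Matrix n n ℂ) from rfl]
    rw [show (star hAA.1.eigenvectorUnitary : Matrix n n ℂ)
        = (hAA.1.eigenvectorUnitary : Matrix n n ℂ)ᴴ from rfl]
    rw [hQe]
    rfl
  have hAQ : A * Q = B * diagonal c := by
    ext i j
    rw [Matrix.mul_diagonal]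
    have hL : (A * Q) i j = (A *ᵥ v j) i := by
      simp [Matrix.mul_apply, Matrix.mulVec, dotProduct, hQdef]
    rw [hL]
    by_cases hj : d j = 0
    · have h0 : (inner ℂ (toE (A *ᵥ v j)) (toE (A *ᵥ v j)) : ℂ) = 0 := by
        rw [inner_eq_dot, key j j, hj]
        simp
      have hAv : toE (A *ᵥ v j) = 0 := inner_self_eq_zero.mp h0
      have hAv' : (A *ᵥ v j) = 0 := congrArg WithLp.ofLp hAv
      rw [hAv']
      simp [hc, hj]
    · have hjs : j ∈ s := hj
      have hbu : B i j = u j i := by rw [hBdef, of_apply, hb j hjs]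
      rw [hbu, hu]
      have hsne : (Real.sqrt (d j) : ℂ) ≠ 0 := by
        have hdj : 0 < d j := lt_of_le_of_ne (hdnn j) (Ne.symm hj)
        exact Complex.ofReal_ne_zero.mpr (by positivity)
      show (A *ᵥ v j) i = ((Real.sqrt (d j) : ℂ))⁻¹ * (A *ᵥ v j) i * c j
      rw [hc]
      field_simp
  refine ⟨B * Qᴴ, ?_, ?_⟩
  · rw [Matrix.conjTranspose_mul, Matrix.conjTranspose_conjTranspose]
    calc Q * Bᴴ * (B * Qᴴ) = Q * (Bᴴ * B) * Qᴴ := by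
          simp only [Matrix.mul_assoc]
      _ = 1 := by rw [hB, Matrix.mul_one, hQ2]
  · rw [hsqrt]
    calc A = A * Q * Qᴴ := by rw [Matrix.mul_assoc, hQ2, Matrix.mul_one]
      _ = B * diagonal c * Qᴴ := by rw [hAQ]
      _ = B * Qᴴ * (Q * diagonal c * Qᴴ) := by
          calc B * diagonal c * Qᴴ = B * (Qᴴ * Q) * diagonal c * Qᴴ := by
                rw [hQ, Matrix.mul_one]
            _ = B * Qᴴ * (Q * diagonal c * Qᴴ) := by simp only [Matrix.mul_assoc]


end ProofAux2

namespace ProofAux2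
open ProofAux
variable {n : Type*} [Fintype n] [DecidableEq n]

lemma exists_polar' (A : Matrix n n ℂ) :
    ∃ U : Matrix n n ℂ, Uᴴ * U = 1 ∧ A = U * msqrt (Aᴴ * A) := by
  obtain ⟨U, hU, hA⟩ := exists_polar A
  exact ⟨U, hU, by rw [msqrt_of_psd (posSemidef_conjTranspose_mul_self A)]; exact hA⟩

lemma re_trace_le_traceNorm {V : Matrix n n ℂ} (A : Matrix n n ℂ) (hV : Vᴴ * V = 1) :
    (V * A).trace.re ≤ traceNorm A := by
  obtain ⟨U, hU, hA⟩ := exists_polar' A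
  have hS : (msqrt (Aᴴ * A)).PosSemidef := msqrt_psd (posSemidef_conjTranspose_mul_self A)
  have hW : (V * U)ᴴ * (V * U) = 1 := by
    rw [Matrix.conjTranspose_mul, Matrix.mul_assoc, ← Matrix.mul_assoc Vᴴ V U, hV,
      Matrix.one_mul, hU]
  have : V * A = V * U * msqrt (Aᴴ * A) := by rw [Matrix.mul_assoc, ← hA]
  rw [this]
  exact re_trace_unitary_mul_le hS hW

lemma traceNorm_eq_trace_msqrt (A : Matrix n n ℂ) :
    traceNorm A = (msqrt (Aᴴ * A)).trace.re := rfl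

lemma traceNorm_add_le (A B : Matrix n n ℂ) :
    traceNorm (A + B) ≤ traceNorm A + traceNorm B := by
  obtain ⟨U, hU, hAB⟩ := exists_polar' (A + B)
  have hU2 : U * Uᴴ = 1 := mul_eq_one_comm.mp hU
  have hUh : (Uᴴ)ᴴ * Uᴴ = 1 := by rw [Matrix.conjTranspose_conjTranspose, hU2]
  have hS : Uᴴ * (A + B) = msqrt ((A + B)ᴴ * (A + B)) := by
    conv_lhs => rw [hAB]
    rw [← Matrix.mul_assoc, hU, Matrix.one_mul]
  rw [traceNorm_eq_trace_msqrt, ← hS, Matrix.mul_add, Matrix.trace_add, Complex.add_re]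
  exact add_le_add (re_trace_le_traceNorm A hUh) (re_trace_le_traceNorm B hUh)

lemma traceNorm_zero : traceNorm (0 : Matrix n n ℂ) = 0 := by
  have h0 : (0 : Matrix n n ℂ).PosSemidef := Matrix.PosSemidef.zero
  rw [traceNorm_psd_eq h0]
  simp

lemma smul_psd {A : Matrix n n ℂ} (t : ℝ) (ht : 0 ≤ t) (hA : A.PosSemidef) :
    ((t : ℂ) • A).PosSemidef := by
  refine Matrix.PosSemidef.of_dotProduct_mulVec_nonneg ?_ ?_
  · unfold Matrix.IsHermitian
    rw [Matrix.conjTranspose_smul, hA.1.eq, Complex.star_def, Complex.conj_ofReal]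
  · intro x
    have h := hA.dotProduct_mulVec_nonneg x
    rw [Matrix.smul_mulVec, dotProduct_smul]
    calc (0 : ℂ) = (t : ℂ) • 0 := by simp
      _ ≤ (t : ℂ) • dotProduct (star x) (A *ᵥ x) := by
          apply smul_le_smul_of_nonneg_left h
          exact_mod_cast Complex.zero_le_real.mpr ht

lemma traceNorm_smul (c : ℂ) (A : Matrix n n ℂ) :
    traceNorm (c • A) = ‖c‖ * traceNorm A := by
  have habs : ((‖c‖ : ℂ)) * (‖c‖ : ℂ) = starRingEnd ℂ c * c := by
    rw [← Complex.normSq_eq_conj_mul_self, ← Complex.ofReal_mul, Complex.normSq_eq_norm_sq, sq]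
  have hAA : (Aᴴ * A).PosSemidef := posSemidef_conjTranspose_mul_self A
  have h1 : (c • A)ᴴ * (c • A) = (starRingEnd ℂ c * c) • (Aᴴ * A) := by
    rw [Matrix.conjTranspose_smul, Matrix.smul_mul, Matrix.mul_smul, smul_smul]
    rfl
  have hB : ((‖c‖ : ℂ) • msqrt (Aᴴ * A)).PosSemidef :=
    smul_psd ‖c‖ (norm_nonneg c) (msqrt_psd hAA)
  have h2 : ((‖c‖ : ℂ) • msqrt (Aᴴ * A)) * ((‖c‖ : ℂ) • msqrt (Aᴴ * A))
      = (c • A)ᴴ * (c • A) := by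
    rw [h1, smul_mul_smul_comm, msqrt_mul_self hAA, habs]
  unfold traceNorm
  rw [msqrt_eq hB h2, Matrix.trace_smul, smul_eq_mul, Complex.mul_re]
  simp [traceNorm]

end ProofAux2

namespace ProofAux2
open ProofAux
variable {n : Type*} [Fintype n] [DecidableEq n] {m : Type*} [Fintype m] [DecidableEq m]

lemma traceNorm_sum_le {ι : Type*} (s : Finset ι) (f : ι → Matrix n n ℂ) :
    traceNorm (∑ i ∈ s, f i) ≤ ∑ i ∈ s, traceNorm (f i) := by
  classical
  induction s using Finset.induction_on with
  | empty => simp [traceNorm_zero]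
  | @insert a s ha ih =>
    rw [Finset.sum_insert ha, Finset.sum_insert ha]
    exact (traceNorm_add_le _ _).trans (by linarith)

lemma kron_conjTranspose (A : Matrix n n ℂ) (B : Matrix m m ℂ) : (A ⊗ₖ B)ᴴ = Aᴴ ⊗ₖ Bᴴ := by
  ext ⟨i, j⟩ ⟨k, l⟩
  simp [Matrix.conjTranspose_apply, Matrix.kroneckerMap_apply, star_mul']

lemma psd_kron {A : Matrix n n ℂ} {B : Matrix m m ℂ} (hA : A.PosSemidef) (hB : B.PosSemidef) :
    (A ⊗ₖ B).PosSemidef := by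
  have h : A ⊗ₖ B = (msqrt A ⊗ₖ msqrt B)ᴴ * (msqrt A ⊗ₖ msqrt B) := by
    rw [kron_conjTranspose, (msqrt_psd hA).1.eq, (msqrt_psd hB).1.eq,
      ← Matrix.mul_kronecker_mul, msqrt_mul_self hA, msqrt_mul_self hB]
  rw [h]
  exact posSemidef_conjTranspose_mul_self _

lemma msqrt_kron {A : Matrix n n ℂ} {P : Matrix m m ℂ} (hA : A.PosSemidef) (hP : P.PosSemidef)
    (hPP : P * P = P) : msqrt (A ⊗ₖ P) = msqrt A ⊗ₖ P := by
  refine msqrt_eq (psd_kron (msqrt_psd hA) hP) ?_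
  rw [← Matrix.mul_kronecker_mul, msqrt_mul_self hA, hPP]

lemma traceNorm_kron_proj (C : Matrix n n ℂ) {P : Matrix m m ℂ} (hP : P.PosSemidef)
    (hPP : P * P = P) (hPt : P.trace = 1) : traceNorm (C ⊗ₖ P) = traceNorm C := by
  unfold traceNorm
  rw [kron_conjTranspose, ← Matrix.mul_kronecker_mul, hP.1.eq, hPP,
    msqrt_kron (posSemidef_conjTranspose_mul_self C) hP hPP, Matrix.trace_kronecker, hPt,
    mul_one]

lemma sum_kron {ι : Type*} (s : Finset ι) (f : ι → Matrix n n ℂ) (P : Matrix m m ℂ) :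
    (∑ i ∈ s, f i) ⊗ₖ P = ∑ i ∈ s, (f i ⊗ₖ P) := by
  classical
  induction s using Finset.induction_on with
  | empty => simp [Matrix.zero_kronecker]
  | @insert a s ha ih =>
    rw [Finset.sum_insert ha, Finset.sum_insert ha, Matrix.add_kronecker, ih]

end ProofAux2

namespace ProofAux2
open ProofAux
variable {m : Type*} [Fintype m] [DecidableEq m]

lemma vecMulVec_conjTranspose (μ : m → ℂ) :
    (Matrix.vecMulVec μ (star μ))ᴴ = Matrix.vecMulVec μ (star μ) := by
  ext i j
  simp [Matrix.conjTranspose_apply, Matrix.vecMulVec_apply]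
  ring

lemma vecMulVec_mul_self {μ : m → ℂ} (hone : dotProduct (star μ) μ = 1) :
    Matrix.vecMulVec μ (star μ) * Matrix.vecMulVec μ (star μ) = Matrix.vecMulVec μ (star μ) := by
  ext i j
  simp only [Matrix.mul_apply, Matrix.vecMulVec_apply, Pi.star_apply]
  calc ∑ k, μ i * star (μ k) * (μ k * star (μ j))
      = (μ i * star (μ j)) * ∑ k, star (μ k) * μ k := by
        rw [Finset.mul_sum]; exact Finset.sum_congr rfl fun k _ => by ring
    _ = μ i * star (μ j) := by
        rw [show (∑ k, star (μ k) * μ k) = dotProduct (star μ) μ from rfl, hone, mul_one]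

lemma vecMulVec_psd (μ : m → ℂ) : (Matrix.vecMulVec μ (star μ)).PosSemidef := by
  refine Matrix.PosSemidef.of_dotProduct_mulVec_nonneg ?_ ?_
  · exact vecMulVec_conjTranspose μ
  · intro x
    have hcalc : dotProduct (star x) (Matrix.vecMulVec μ (star μ) *ᵥ x)
        = star (dotProduct (star μ) x) * dotProduct (star μ) x := by
      simp only [dotProduct, Matrix.mulVec, Matrix.vecMulVec_apply, Pi.star_apply,
        Finset.mul_sum, Finset.sum_mul, star_sum, star_mul', star_star]
      rw [Finset.sum_comm]
      exact Finset.sum_congr rfl fun i _ => Finset.sum_congr rfl fun j _ => by ring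
    rw [hcalc]
    exact star_mul_self_nonneg _

lemma vecMulVec_trace {μ : m → ℂ} (hone : dotProduct (star μ) μ = 1) :
    (Matrix.vecMulVec μ (star μ)).trace = 1 := by
  rw [← hone, Matrix.trace]
  simp only [Matrix.diag_apply, Matrix.vecMulVec_apply, Pi.star_apply, dotProduct]
  exact Finset.sum_congr rfl fun i _ => by ring

end ProofAux2

open Matrix ProofAux ProofAux2

/-- Controlled extension maps: if `X = X₀⟨0| + X₁⟨1| : H_in ⊗ ℂ² → H_out` and `ρ` is a
full-rank density matrix on `H_in` with
`‖ρ^{1/2}(Xᵢ†Xⱼ - δᵢⱼ 𝟙)ρ^{1/2}‖₁ ≤ ε` for all `i, j`, then for every unit vector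
`|μ⟩ ∈ ℂ²`, `‖(ρ ⊗ |μ⟩⟨μ|)^{1/2}(X†X - 𝟙)(ρ ⊗ |μ⟩⟨μ|)^{1/2}‖₁ ≤ 4ε`. -/
theorem controlled_extension_approx_isometry
    {I J : Type*} [Fintype I] [DecidableEq I] [Fintype J]
    (Xv : Fin 2 → Matrix J I ℂ)
    (ρ : Matrix I I ℂ) (hρ : ρ.PosDef) (hρtr : ρ.trace = 1)
    (ε : ℝ)
    (h : ∀ i j : Fin 2,
      traceNorm (msqrt ρ * ((Xv i)ᴴ * Xv j
        - if i = j then (1 : Matrix I I ℂ) else 0) * msqrt ρ) ≤ ε)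
    (X : Matrix J (I × Fin 2) ℂ)
    (hX : X = Matrix.of fun o p => Xv p.2 o p.1)
    (μ : Fin 2 → ℂ) (hμ : ∑ j, Complex.normSq (μ j) = 1) :
    traceNorm (msqrt (ρ ⊗ₖ Matrix.vecMulVec μ (star μ))
        * (Xᴴ * X - 1)
        * msqrt (ρ ⊗ₖ Matrix.vecMulVec μ (star μ))) ≤ 4 * ε := by
  classical
  set P : Matrix (Fin 2) (Fin 2) ℂ := Matrix.vecMulVec μ (star μ) with hPdef
  have hone : dotProduct (star μ) μ = 1 := by
    unfold dotProduct
    calc ∑ j, star μ j * μ j = ∑ j, (Complex.normSq (μ j) : ℂ) := by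
          refine Finset.sum_congr rfl fun j _ => ?_
          rw [Pi.star_apply, Complex.star_def, ← Complex.normSq_eq_conj_mul_self]
      _ = ((∑ j, Complex.normSq (μ j) : ℝ) : ℂ) := by push_cast; rfl
      _ = 1 := by rw [hμ]; norm_num
  have hPP : P * P = P := vecMulVec_mul_self hone
  have hPpsd : P.PosSemidef := vecMulVec_psd μ
  have hPt : P.trace = 1 := vecMulVec_trace hone
  have hσ : msqrt (ρ ⊗ₖ P) = msqrt ρ ⊗ₖ P := msqrt_kron hρ.posSemidef hPpsd hPP
  set M : Fin 2 → Fin 2 → Matrix I I ℂ :=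
    fun c d => (Xv c)ᴴ * Xv d - if c = d then 1 else 0 with hMdef
  set E : Fin 2 → Fin 2 → Matrix (Fin 2) (Fin 2) ℂ :=
    fun c d => Matrix.of fun a b => (if a = c then 1 else 0) * (if b = d then 1 else 0) with hEdef
  have decomp : Xᴴ * X - 1 = ∑ c, ∑ d, (M c d) ⊗ₖ (E c d) := by
    ext ⟨i, a⟩ ⟨j, b⟩
    have hRHS : (∑ c, ∑ d, (M c d) ⊗ₖ (E c d)) (i, a) (j, b) = M a b i j := by
      simp only [Matrix.sum_apply, Matrix.kroneckerMap_apply, hEdef, Matrix.of_apply]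
      fin_cases a <;> fin_cases b <;> simp [Fin.sum_univ_two]
    rw [hRHS]
    simp only [Matrix.sub_apply, Matrix.mul_apply, Matrix.one_apply, hX, Matrix.of_apply,
      hMdef, Matrix.conjTranspose_apply]
    congr 1
    by_cases hab : a = b <;> by_cases hij : i = j <;>
      simp [hab, hij, Prod.ext_iff, Matrix.one_apply]
  have hPEP : ∀ c d : Fin 2, P * E c d * P = (starRingEnd ℂ (μ c) * μ d) • P := by
    intro c d
    ext a b
    simp only [Matrix.mul_apply, Matrix.of_apply, Matrix.vecMulVec_apply, Pi.star_apply,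
      Matrix.smul_apply, smul_eq_mul, hEdef, hPdef]
    fin_cases c <;> fin_cases d <;> simp [Fin.sum_univ_two] <;> ring
  have hmain : (msqrt ρ ⊗ₖ P) * (Xᴴ * X - 1) * (msqrt ρ ⊗ₖ P)
      = (∑ c, ∑ d, (starRingEnd ℂ (μ c) * μ d) • (msqrt ρ * M c d * msqrt ρ)) ⊗ₖ P := by
    rw [decomp, Finset.mul_sum, Finset.sum_mul, sum_kron]
    refine Finset.sum_congr rfl fun c _ => ?_
    rw [Finset.mul_sum, Finset.sum_mul, sum_kron]
    refine Finset.sum_congr rfl fun d _ => ?_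
    rw [← Matrix.mul_kronecker_mul, ← Matrix.mul_kronecker_mul, hPEP c d,
      Matrix.kronecker_smul, ← Matrix.smul_kronecker]
  rw [hσ, hmain, traceNorm_kron_proj _ hPpsd hPP hPt]
  have hε : 0 ≤ ε := le_trans (traceNorm_nonneg _) (h 0 0)
  have hnsq : ∀ j, Complex.normSq (μ j) ≤ 1 := by
    intro j
    have h1 := Finset.single_le_sum (f := fun j => Complex.normSq (μ j))
      (fun i _ => Complex.normSq_nonneg _) (Finset.mem_univ j)
    rw [hμ] at h1
    exact h1
  have habs : ∀ j, ‖μ j‖ ≤ 1 := by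
    intro j
    nlinarith [Complex.sq_norm (μ j), norm_nonneg (μ j), hnsq j]
  have hbound : ∀ c d : Fin 2,
      traceNorm ((starRingEnd ℂ (μ c) * μ d) • (msqrt ρ * M c d * msqrt ρ)) ≤ ε := by
    intro c d
    rw [traceNorm_smul]
    have h1 : ‖starRingEnd ℂ (μ c) * μ d‖ ≤ 1 := by
      rw [norm_mul, Complex.norm_conj]
      exact mul_le_one₀ (habs c) (norm_nonneg _) (habs d)
    calc ‖starRingEnd ℂ (μ c) * μ d‖ * traceNorm (msqrt ρ * M c d * msqrt ρ)
        ≤ 1 * ε := mul_le_mul h1 (h c d) (traceNorm_nonneg _) one_pos.le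
      _ = ε := one_mul ε
  calc traceNorm (∑ c, ∑ d, (starRingEnd ℂ (μ c) * μ d) • (msqrt ρ * M c d * msqrt ρ))
      ≤ ∑ c, traceNorm (∑ d, (starRingEnd ℂ (μ c) * μ d) • (msqrt ρ * M c d * msqrt ρ)) :=
        traceNorm_sum_le _ _
    _ ≤ ∑ c, ∑ d, traceNorm ((starRingEnd ℂ (μ c) * μ d) • (msqrt ρ * M c d * msqrt ρ)) :=
        Finset.sum_le_sum fun c _ => traceNorm_sum_le _ _
    _ ≤ ∑ _c : Fin 2, ∑ _d : Fin 2, ε :=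
        Finset.sum_le_sum fun c _ => Finset.sum_le_sum fun d _ => hbound c d
    _ = 4 * ε := by simp [Fin.sum_univ_two]; ring
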